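/- arXiv:2604.15620 — 7 statements merged into one kernel-verified Lean document; each statement's English description precedes it below -/
import Mathlib

section
/- Let S, L, I, R : ℝ → ℝ be an SLIR solution on [0,∞). If S(0) ≥ 0, L(0) ≥ 0, I(0) ≥ 0 and R(0) ≥ 0, then S(t) ≥ 0, L(t) ≥ 0, I(t) ≥ 0 and R(t) ≥ 0 for all t ≥ 0. -/
/-!
Let `F` be the sum of the negative parts of the four compartments. On a compact interval
`[0, T]` the coefficient `β (|S| + |I|) / N` is bounded, since `N > 0` is continuous. Whenever a
compartment is `≤ 0`, its derivative is bounded below by `-K F` for a suitable constant `K`: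
the terms `Λ`, `-μ S`, `-(k + μ) L`, ... cannot decrease it, and the remaining couplings are
controlled by the negative parts of the other compartments. Hence the right Dini derivative of
`F` is at most `4 K F`, and since `F 0 = 0`, Grönwall's inequality forces `F = 0`.
-/

open Set Filter Topology

lemma eventually_slope_negPart_lt {f : ℝ → ℝ} {f' x r : ℝ} (hf : HasDerivAt f f' x)
    (hr : 0 < r) (hneg : f x ≤ 0 → -f' < r) :
    ∀ᶠ z in 𝓝[>] x, slope (fun y ↦ (f y)⁻) x z < r := by
  rcases lt_or_ge 0 (f x) with hx | hx
  · filter_upwards [nhdsWithin_le_nhds (hf.continuousAt.eventually (eventually_gt_nhds hx))]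
      with z hz
    simpa [slope_def_field, negPart_eq_zero.2 hz.le, negPart_eq_zero.2 hx.le] using hr
  · have hslope := (hf.neg.hasDerivWithinAt (s := Ioi x)).limsup_slope_le' (lt_irrefl x) (hneg hx)
    filter_upwards [hslope, self_mem_nhdsWithin] with z hz (hxz : x < z)
    rcases le_or_gt (f z) 0 with hz' | hz'
    · simpa [slope_def_field, negPart_eq_neg.2 hz', negPart_eq_neg.2 hx] using hz
    · calc slope (fun y ↦ (f y)⁻) x z = f x / (z - x) := by
            simp [slope_def_field, negPart_eq_zero.2 hz'.le, negPart_eq_neg.2 hx]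
        _ ≤ 0 := div_nonpos_of_nonpos_of_nonneg hx (sub_pos.2 hxz).le
        _ < r := hr

theorem nonneg_of_quasipositive {ι : Type*} [Fintype ι] {X X' : ι → ℝ → ℝ} {K T : ℝ}
    (hX : ∀ i, ∀ t ∈ Icc 0 T, HasDerivAt (X i) (X' i t) t) (h0 : ∀ i, 0 ≤ X i 0)
    (hK : ∀ i, ∀ t ∈ Ico 0 T, X i t ≤ 0 → -(K * ∑ j, (X j t)⁻) ≤ X' i t) :
    ∀ t ∈ Icc 0 T, ∀ i, 0 ≤ X i t := by
  set F : ℝ → ℝ := fun t ↦ ∑ j, (X j t)⁻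
  have hF_nonneg (t : ℝ) : 0 ≤ F t := Finset.sum_nonneg fun j _ ↦ negPart_nonneg _
  wlog hK₀ : 0 ≤ K generalizing K
  · refine this (K := 0) (fun i t ht hXi ↦ le_trans ?_ (hK i t ht hXi)) le_rfl
    nlinarith [hF_nonneg t]
  have hF_cont : ContinuousOn F (Icc 0 T) := continuousOn_finsetSum _ fun j _ ↦
    ((continuousOn_of_forall_continuousAt fun t ht ↦ (hX j t ht).continuousAt).neg.sup
      continuousOn_const)
  have hF_slope : ∀ x ∈ Ico 0 T, ∀ r, Fintype.card ι * K * F x < r →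
      ∃ᶠ z in 𝓝[>] x, (z - x)⁻¹ * (F z - F x) < r := by
    intro x hx r hr
    set ε := (r - Fintype.card ι * K * F x) / (Fintype.card ι + 1)
    have hε : 0 < ε := div_pos (sub_pos.2 hr) (by positivity)
    have hr_eq : r = Fintype.card ι * (K * F x + ε) + ε := by
      simp only [ε]; field_simp; ring
    have h_each (i : ι) : ∀ᶠ z in 𝓝[>] x, slope (fun y ↦ (X i y)⁻) x z < K * F x + ε :=
      eventually_slope_negPart_lt (hX i x (Ico_subset_Icc_self hx))
        (by nlinarith [hF_nonneg x]) fun hXi ↦ by linarith [hK i x hx hXi]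
    refine (eventually_all.2 h_each).frequently.mono fun z hz ↦ ?_
    calc (z - x)⁻¹ * (F z - F x) = ∑ i, slope (fun y ↦ (X i y)⁻) x z := by
          simp only [F, slope_def_module, smul_eq_mul, ← Finset.sum_sub_distrib, Finset.mul_sum]
      _ ≤ ∑ _i : ι, (K * F x + ε) := Finset.sum_le_sum fun i _ ↦ (hz i).le
      _ < r := by rw [Finset.sum_const, Finset.card_univ, nsmul_eq_mul]; linarith
  intro t ht i
  have hFt : F t ≤ 0 := by
    simpa [gronwallBound_ε0_δ0] using le_gronwallBound_of_liminf_deriv_right_le hF_cont hF_slope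
      (show F 0 ≤ 0 by simp [F, negPart_eq_zero.2 (h0 _)]) (fun x _ ↦ (add_zero _).ge) t ht
  exact negPart_eq_zero.1 <| (Finset.sum_eq_zero_iff_of_nonneg fun j _ ↦ negPart_nonneg _).1
    (hFt.antisymm (hF_nonneg t)) i (Finset.mem_univ i)

lemma neg_mul_add_negPart_le_mul (a b : ℝ) : -((|a| + |b|) * (a⁻ + b⁻)) ≤ a * b := by
  rcases le_total 0 a with ha | ha <;> rcases le_total 0 b with hb | hb <;>
    simp only [abs_of_nonneg, abs_of_nonpos, negPart_eq_zero.2, negPart_eq_neg.2, ha, hb] <;>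
    nlinarith

lemma mul_le_add_mul_negPart {a : ℝ} (b : ℝ) (ha : a ≤ 0) : a * b ≤ (|a| + |b|) * a⁻ := by
  rw [negPart_eq_neg.2 ha, abs_of_nonpos ha]
  nlinarith [neg_abs_le b, le_abs_self b]

section SLIR

variable {Λ μ β k γ d C s l i r : ℝ}

lemma slir_quasipositive (hΛ : 0 ≤ Λ) (hμ : 0 ≤ μ) (hβ : 0 ≤ β) (hk : 0 ≤ k) (hγ : 0 ≤ γ)
    (hd : 0 ≤ d) (hN : 0 < s + l + i + r) (hC : β * (|s| + |i|) / (s + l + i + r) ≤ C) :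
    (s ≤ 0 → -((C + k + γ) * (s⁻ + l⁻ + i⁻ + r⁻)) ≤
      Λ - β * s * i / (s + l + i + r) - μ * s) ∧
    (l ≤ 0 → -((C + k + γ) * (s⁻ + l⁻ + i⁻ + r⁻)) ≤
      β * s * i / (s + l + i + r) - (k + μ) * l) ∧
    (i ≤ 0 → -((C + k + γ) * (s⁻ + l⁻ + i⁻ + r⁻)) ≤ k * l - (γ + μ + d) * i) ∧
    (r ≤ 0 → -((C + k + γ) * (s⁻ + l⁻ + i⁻ + r⁻)) ≤ γ * i - μ * r) := by
  set N := s + l + i + r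
  have hβN : 0 ≤ β / N := div_nonneg hβ hN.le
  have hC' : β / N * (|s| + |i|) ≤ C := by rwa [div_mul_eq_mul_div]
  have hC₀ : 0 ≤ C := le_trans (by positivity) hC'
  have hsi : β * s * i / N = β / N * (s * i) := by ring
  have hs := negPart_nonneg s
  have hl := negPart_nonneg l
  have hi := negPart_nonneg i
  have hr := negPart_nonneg r
  refine ⟨fun hs0 ↦ ?_, fun hl0 ↦ ?_, fun hi0 ↦ ?_, fun hr0 ↦ ?_⟩
  · have h1 : β * s * i / N ≤ C * s⁻ := by
      rw [hsi]
      nlinarith [mul_le_mul_of_nonneg_left (mul_le_add_mul_negPart i hs0) hβN]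
    nlinarith [negPart_eq_neg.2 hs0]
  · have h1 : -(C * (s⁻ + i⁻)) ≤ β * s * i / N := by
      rw [hsi]
      nlinarith [mul_le_mul_of_nonneg_left (neg_mul_add_negPart_le_mul s i) hβN]
    nlinarith [negPart_eq_neg.2 hl0]
  · nlinarith [neg_le_negPart l, negPart_eq_neg.2 hi0]
  · nlinarith [neg_le_negPart i, negPart_eq_neg.2 hr0]

end SLIR

/-- Positivity of SLIR solutions on [0,∞): if all compartments start
nonnegative, they remain nonnegative for all t ≥ 0. -/
theorem slir_positivity
    (Λ μ β k γ d : ℝ)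
    (hΛ : 0 < Λ) (hμ : 0 < μ) (hβ : 0 < β) (hk : 0 < k) (hγ : 0 < γ) (hd : 0 < d)
    (S L I R : ℝ → ℝ)
    (hNpos : ∀ t, 0 ≤ t → 0 < S t + L t + I t + R t)
    (hS : ∀ t, 0 ≤ t →
      HasDerivAt S (Λ - β * S t * I t / (S t + L t + I t + R t) - μ * S t) t)
    (hL : ∀ t, 0 ≤ t →
      HasDerivAt L (β * S t * I t / (S t + L t + I t + R t) - (k + μ) * L t) t)
    (hI : ∀ t, 0 ≤ t → HasDerivAt I (k * L t - (γ + μ + d) * I t) t)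
    (hR : ∀ t, 0 ≤ t → HasDerivAt R (γ * I t - μ * R t) t)
    (hS0 : 0 ≤ S 0) (hL0 : 0 ≤ L 0) (hI0 : 0 ≤ I 0) (hR0 : 0 ≤ R 0) :
    ∀ t, 0 ≤ t → 0 ≤ S t ∧ 0 ≤ L t ∧ 0 ≤ I t ∧ 0 ≤ R t := by
  intro t ht
  have hSc : ContinuousOn S (Icc 0 t) := fun τ hτ ↦ (hS τ hτ.1).continuousAt.continuousWithinAt
  have hLc : ContinuousOn L (Icc 0 t) := fun τ hτ ↦ (hL τ hτ.1).continuousAt.continuousWithinAt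
  have hIc : ContinuousOn I (Icc 0 t) := fun τ hτ ↦ (hI τ hτ.1).continuousAt.continuousWithinAt
  have hRc : ContinuousOn R (Icc 0 t) := fun τ hτ ↦ (hR τ hτ.1).continuousAt.continuousWithinAt
  obtain ⟨C, hC⟩ := isCompact_Icc.exists_bound_of_continuousOn
    (f := fun τ ↦ β * (|S τ| + |I τ|) / (S τ + L τ + I τ + R τ))
    (ContinuousOn.div (by fun_prop) (by fun_prop) fun τ hτ ↦ (hNpos τ hτ.1).ne')
  have key := nonneg_of_quasipositive (X := ![S, L, I, R]) (K := C + k + γ) (T := t)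
    (X' := ![fun τ ↦ Λ - β * S τ * I τ / (S τ + L τ + I τ + R τ) - μ * S τ,
      fun τ ↦ β * S τ * I τ / (S τ + L τ + I τ + R τ) - (k + μ) * L τ,
      fun τ ↦ k * L τ - (γ + μ + d) * I τ, fun τ ↦ γ * I τ - μ * R τ])
    (fun j τ hτ ↦ by fin_cases j; exacts [hS τ hτ.1, hL τ hτ.1, hI τ hτ.1, hR τ hτ.1])
    (fun j ↦ by fin_cases j; exacts [hS0, hL0, hI0, hR0])
    (fun j τ hτ ↦ by
      obtain ⟨h₁, h₂, h₃, h₄⟩ := slir_quasipositive hΛ.le hμ.le hβ.le hk.le hγ.le hd.le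
        (hNpos τ hτ.1) ((le_abs_self _).trans (hC τ (Ico_subset_Icc_self hτ)))
      rw [Fin.sum_univ_four]
      fin_cases j; exacts [h₁, h₂, h₃, h₄])
    t ⟨ht, le_rfl⟩
  exact ⟨key 0, key 1, key 2, key 3⟩
end

section
/- There exists an equilibrium of the SLIR vector field with positive infectious compartment, i.e., a point (S*, L*, I*, R*) with S* > 0, L* > 0, I* > 0, R* > 0 and S* + L* + I* + R* > 0 at which f vanishes, if and only if R₀ > 1. -/
noncomputable def slirField (Λ μ β k γ d : ℝ) (x : Fin 4 → ℝ) : Fin 4 → ℝ :=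
  ![Λ - β * x 0 * x 2 / (x 0 + x 1 + x 2 + x 3) - μ * x 0,
    β * x 0 * x 2 / (x 0 + x 1 + x 2 + x 3) - (k + μ) * x 1,
    k * x 1 - (γ + μ + d) * x 2,
    γ * x 2 - μ * x 3]

/-!
At an equilibrium with `I ≠ 0`, the `L`- and `I`-equations combine to
`β k S = (k + μ) (γ + μ + d) N`, i.e. `R₀ = N / S`, which exceeds `1` exactly because
`L + I + R > 0`. Conversely, when `R₀ > 1`, the ratios `L / I`, `R / I` and `S / I` are fixed by
the `I`- and `R`-equations and that balance, and the remaining equation `Λ = (k + μ) L + μ S` is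
linear in the scale `I`, with a positive solution.
-/

variable {Λ μ β k γ d S L I R : ℝ}

theorem slirField_eq_zero_iff_components :
    slirField Λ μ β k γ d ![S, L, I, R] = 0 ↔
      Λ - β * S * I / (S + L + I + R) - μ * S = 0 ∧
        β * S * I / (S + L + I + R) - (k + μ) * L = 0 ∧
        k * L - (γ + μ + d) * I = 0 ∧ γ * I - μ * R = 0 := by
  simp [slirField, funext_iff, Fin.forall_fin_succ]

theorem slirField_eq_zero_iff (hN : S + L + I + R ≠ 0) (hI : I ≠ 0) (hk : k ≠ 0) :
    slirField Λ μ β k γ d ![S, L, I, R] = 0 ↔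
      β * k * S = (k + μ) * (γ + μ + d) * (S + L + I + R) ∧ k * L = (γ + μ + d) * I ∧
        γ * I = μ * R ∧ Λ = (k + μ) * L + μ * S := by
  rw [slirField_eq_zero_iff_components]
  constructor
  · rintro ⟨eqS, eqL, eqI, eqR⟩
    refine ⟨?_, by linarith, by linarith, by linarith⟩
    rw [sub_eq_zero, div_eq_iff hN] at eqL
    refine mul_right_cancel₀ hI ?_
    linear_combination k * eqL + (k + μ) * (S + L + I + R) * eqI
  · rintro ⟨hbal, eqI, eqR, eqΛ⟩
    have hinc : β * S * I / (S + L + I + R) = (k + μ) * L := by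
      rw [div_eq_iff hN]
      refine mul_left_cancel₀ hk ?_
      linear_combination I * hbal - (k + μ) * (S + L + I + R) * eqI
    exact ⟨by rw [hinc]; linarith, by rw [hinc]; ring, by linarith, by linarith⟩

theorem exists_slir_endemic_balance (hΛ : 0 < Λ) (hμ : 0 < μ) (hk : 0 < k) (hγ : 0 < γ)
    (hb : 0 < γ + μ + d) (hR₀ : (k + μ) * (γ + μ + d) < β * k) :
    ∃ S L I R : ℝ, 0 < S ∧ 0 < L ∧ 0 < I ∧ 0 < R ∧
      β * k * S = (k + μ) * (γ + μ + d) * (S + L + I + R) ∧ k * L = (γ + μ + d) * I ∧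
        γ * I = μ * R ∧ Λ = (k + μ) * L + μ * S := by
  have hr : 0 < β * k - (k + μ) * (γ + μ + d) := sub_pos.2 hR₀
  set s := (k + μ) * (γ + μ + d) * ((γ + μ + d) / k + 1 + γ / μ) /
    (β * k - (k + μ) * (γ + μ + d)) with hs
  have hs_pos : 0 < s := by positivity
  set t := Λ / ((k + μ) * (γ + μ + d) / k + μ * s) with ht
  have ht_pos : 0 < t := by positivity
  refine ⟨s * t, (γ + μ + d) * t / k, t, γ * t / μ, by positivity, by positivity, ht_pos,
    by positivity, ?_, by field_simp, by field_simp, ?_⟩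
  · rw [hs]
    field_simp
    ring
  · rw [ht]
    field_simp

theorem slir_endemic_equilibrium_exists_iff_general
    (Λ μ β k γ d : ℝ)
    (hΛ : 0 < Λ) (hμ : 0 < μ) (hk : 0 < k) (hγ : 0 < γ) (hd : 0 < d) :
    (∃ S L I R : ℝ, 0 < S ∧ 0 < L ∧ 0 < I ∧ 0 < R ∧ 0 < S + L + I + R ∧
        slirField Λ μ β k γ d ![S, L, I, R] = 0) ↔
      1 < β * k / ((k + μ) * (γ + μ + d)) := by
  have hab : 0 < (k + μ) * (γ + μ + d) := by positivity
  rw [one_lt_div hab]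
  constructor
  · rintro ⟨S, L, I, R, hS, hL, hI, hR, hN, hzero⟩
    obtain ⟨hbal, -⟩ := (slirField_eq_zero_iff hN.ne' hI.ne' hk.ne').1 hzero
    nlinarith [mul_pos hab (show 0 < L + I + R by positivity)]
  · intro hR₀
    obtain ⟨S, L, I, R, hS, hL, hI, hR, hbal⟩ :=
      exists_slir_endemic_balance hΛ hμ hk hγ (by positivity) hR₀
    exact ⟨S, L, I, R, hS, hL, hI, hR, by positivity,
      (slirField_eq_zero_iff (by positivity) hI.ne' hk.ne').2 hbal⟩

/-- An endemic equilibrium (all coordinates positive, in particular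
positive infectious compartment, and positive total population) exists if and
only if R₀ = βk/((k+μ)(γ+μ+d)) > 1. -/
theorem slir_endemic_equilibrium_exists_iff
    (Λ μ β k γ d : ℝ)
    (hΛ : 0 < Λ) (hμ : 0 < μ) (hβ : 0 < β) (hk : 0 < k) (hγ : 0 < γ) (hd : 0 < d) :
    (∃ S L I R : ℝ, 0 < S ∧ 0 < L ∧ 0 < I ∧ 0 < R ∧ 0 < S + L + I + R ∧
        slirField Λ μ β k γ d ![S, L, I, R] = 0) ↔
      1 < β * k / ((k + μ) * (γ + μ + d)) :=
  slir_endemic_equilibrium_exists_iff_general Λ μ β k γ d hΛ hμ hk hγ hd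
end

section
/- If R₀ > 1, then the SLIR vector field has exactly one equilibrium with positive infectious compartment: any two points (S₁, L₁, I₁, R₁) and (S₂, L₂, I₂, R₂), each with all coordinates positive and at which f vanishes, are equal. -/
/-!
At an equilibrium with `I ≠ 0` the four equations become linear: `L` and `R` are multiples
of `I`, and cancelling `I` from the incidence term gives `β k S = (k + μ)(γ + μ + d) N`.
Together with the total-population balance `Λ = μ N + d I` this is a linear system in
`(N, I)` with determinant `μ (k + μ)(γ + μ + d)(β - d)`, and `R₀ > 1` forces `β > d`.
-/

theorem eq_and_eq_of_det_ne_zero {R : Type*} [CommRing R] [NoZeroDivisors R]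
    {a b c e x y x' y' : R} (hdet : a * e - b * c ≠ 0)
    (h₁ : a * x + b * y = a * x' + b * y') (h₂ : c * x + e * y = c * x' + e * y') :
    x = x' ∧ y = y' := by
  have hx : (a * e - b * c) * (x - x') = 0 := by linear_combination e * h₁ - b * h₂
  have hy : (a * e - b * c) * (y - y') = 0 := by linear_combination a * h₂ - c * h₁
  exact ⟨sub_eq_zero.mp ((mul_eq_zero.mp hx).resolve_left hdet),
    sub_eq_zero.mp ((mul_eq_zero.mp hy).resolve_left hdet)⟩

noncomputable def slirR0 (μ β k γ d : ℝ) : ℝ := β * k / ((k + μ) * (γ + μ + d))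

section

variable {Λ μ β k γ d S L I R : ℝ}

theorem lt_of_one_lt_slirR0 (hμ : 0 < μ) (hk : 0 < k) (hγ : 0 ≤ γ) (hd : 0 ≤ d)
    (hR0 : 1 < slirR0 μ β k γ d) : d < β := by
  have hP : 0 < (k + μ) * (γ + μ + d) := by positivity
  have hkd : k * d < (k + μ) * (γ + μ + d) := by nlinarith
  have hPβ : (k + μ) * (γ + μ + d) < β * k := by
    simpa using (one_lt_div hP).mp hR0
  exact lt_of_mul_lt_mul_left (hkd.trans (by linarith)) hk.le

theorem slirField_eq_zero_relations (hN : S + L + I + R ≠ 0) (hI : I ≠ 0)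
    (h : slirField Λ μ β k γ d ![S, L, I, R] = 0) :
    k * L = (γ + μ + d) * I ∧ μ * R = γ * I ∧
      β * k * S = (k + μ) * (γ + μ + d) * (S + L + I + R) ∧
      Λ = μ * (S + L + I + R) + d * I := by
  have e₀ := congrFun h 0
  have e₁ := congrFun h 1
  have e₂ := congrFun h 2
  have e₃ := congrFun h 3
  simp only [slirField, Matrix.cons_val, Pi.zero_apply] at e₀ e₁ e₂ e₃
  have hL : k * L = (γ + μ + d) * I := by linarith
  have hincidence : β * S * I = (k + μ) * L * (S + L + I + R) := by
    rw [← div_eq_iff hN]; linarith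
  refine ⟨hL, by linarith, mul_right_cancel₀ hI ?_, by linarith⟩
  linear_combination k * hincidence + (k + μ) * (S + L + I + R) * hL

theorem slir_equilibrium_linear_system (hL : k * L = (γ + μ + d) * I) (hR : μ * R = γ * I)
    (hS : β * k * S = (k + μ) * (γ + μ + d) * (S + L + I + R))
    (hΛ : Λ = μ * (S + L + I + R) + d * I) :
    β * k * Λ = μ * ((k + μ) * (γ + μ + d)) * (S + L + I + R)
      + β * ((k + μ) * (γ + μ + d)) * I := by
  linear_combination β * k * hΛ + β * μ * hL + β * k * hR + μ * hS

end

theorem slir_endemic_equilibrium_unique_general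
    (Λ μ β k γ d : ℝ)
    (hμ : 0 < μ) (hβ : 0 < β) (hk : 0 < k) (hγ : 0 < γ) (hd : 0 < d)
    (hR0 : 1 < β * k / ((k + μ) * (γ + μ + d)))
    (S₁ L₁ I₁ R₁ S₂ L₂ I₂ R₂ : ℝ)
    (h1 : 0 < S₁ ∧ 0 < L₁ ∧ 0 < I₁ ∧ 0 < R₁)
    (h2 : 0 < S₂ ∧ 0 < L₂ ∧ 0 < I₂ ∧ 0 < R₂)
    (heq1 : slirField Λ μ β k γ d ![S₁, L₁, I₁, R₁] = 0)
    (heq2 : slirField Λ μ β k γ d ![S₂, L₂, I₂, R₂] = 0) :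
    S₁ = S₂ ∧ L₁ = L₂ ∧ I₁ = I₂ ∧ R₁ = R₂ := by
  obtain ⟨hS₁, hL₁, hI₁, hR₁⟩ := h1
  obtain ⟨hS₂, hL₂, hI₂, hR₂⟩ := h2
  obtain ⟨eL₁, eR₁, eS₁, eΛ₁⟩ :=
    slirField_eq_zero_relations (by positivity) hI₁.ne' heq1
  obtain ⟨eL₂, eR₂, eS₂, eΛ₂⟩ :=
    slirField_eq_zero_relations (by positivity) hI₂.ne' heq2
  have hβd : d < β := lt_of_one_lt_slirR0 hμ hk hγ.le hd.le hR0
  have hdet : μ * (β * ((k + μ) * (γ + μ + d))) - d * (μ * ((k + μ) * (γ + μ + d))) ≠ 0 := by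
    have := mul_pos (mul_pos hμ (by positivity : 0 < (k + μ) * (γ + μ + d))) (sub_pos.mpr hβd)
    exact ne_of_gt (by linarith)
  obtain ⟨hN, hI⟩ := eq_and_eq_of_det_ne_zero hdet (eΛ₁.symm.trans eΛ₂)
    ((slir_equilibrium_linear_system eL₁ eR₁ eS₁ eΛ₁).symm.trans
      (slir_equilibrium_linear_system eL₂ eR₂ eS₂ eΛ₂))
  refine ⟨mul_left_cancel₀ (by positivity : β * k ≠ 0) ?_, mul_left_cancel₀ hk.ne' ?_, hI,
    mul_left_cancel₀ hμ.ne' ?_⟩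
  · rw [eS₁, eS₂, hN]
  · rw [eL₁, eL₂, hI]
  · rw [eR₁, eR₂, hI]

/-- If R₀ > 1, the endemic equilibrium is unique: any two equilibria
of the SLIR vector field with all coordinates positive coincide. -/
theorem slir_endemic_equilibrium_unique
    (Λ μ β k γ d : ℝ)
    (hΛ : 0 < Λ) (hμ : 0 < μ) (hβ : 0 < β) (hk : 0 < k) (hγ : 0 < γ) (hd : 0 < d)
    (hR0 : 1 < β * k / ((k + μ) * (γ + μ + d)))
    (S₁ L₁ I₁ R₁ S₂ L₂ I₂ R₂ : ℝ)
    (h1 : 0 < S₁ ∧ 0 < L₁ ∧ 0 < I₁ ∧ 0 < R₁)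
    (h2 : 0 < S₂ ∧ 0 < L₂ ∧ 0 < I₂ ∧ 0 < R₂)
    (heq1 : slirField Λ μ β k γ d ![S₁, L₁, I₁, R₁] = 0)
    (heq2 : slirField Λ μ β k γ d ![S₂, L₂, I₂, R₂] = 0) :
    S₁ = S₂ ∧ L₁ = L₂ ∧ I₁ = I₂ ∧ R₁ = R₂ :=
  slir_endemic_equilibrium_unique_general Λ μ β k γ d hμ hβ hk hγ hd hR0 S₁ L₁ I₁ R₁ S₂ L₂ I₂ R₂ h1
    h2 heq1 heq2
end

section
/- Let F be the 2×2 real matrix with rows (0, β) and (0, 0), and let V be the 2×2 real matrix with rows (k+μ, 0) and (−k, γ+μ+d). Then V is invertible, the matrix K = F · V⁻¹ has eigenvalues (over ℂ) exactly βk/((k+μ)(γ+μ+d)) and 0, and the spectral radius of K equals R₀ = βk/((k+μ)(γ+μ+d)). -/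
/-!
Since the second row of `F` vanishes, `K = F V⁻¹` is upper triangular with diagonal `(R₀, 0)`,
and the eigenvalues of a triangular matrix are its diagonal entries.
-/

theorem Matrix.spectrum_fin_two_upperTriangular {K : Type*} [Field K] (a b c : K) :
    spectrum K !![a, b; 0, c] = {a, c} := by
  ext z
  rw [spectrum.mem_iff, Matrix.isUnit_iff_isUnit_det, isUnit_iff_ne_zero, not_not,
    Matrix.det_fin_two]
  simp [Matrix.algebraMap_matrix_apply, sub_eq_zero, eq_comm]

theorem Matrix.inv_fin_two_lowerTriangular {K : Type*} [Field K] {a b : K} (ha : a ≠ 0)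
    (hb : b ≠ 0) (c : K) : !![a, 0; c, b]⁻¹ = !![a⁻¹, 0; -c / (a * b), b⁻¹] := by
  refine Matrix.inv_eq_left_inv ?_
  rw [Matrix.mul_fin_two, Matrix.one_fin_two]
  simp [ha, hb]
  field_simp
  ring

theorem spectralRadius_eq_nnnorm_of_spectrum_eq_pair {𝕜 A : Type*} [NormedField 𝕜] [Ring A]
    [Algebra 𝕜 A] {a : A} {x : 𝕜} (h : spectrum 𝕜 a = {x, 0}) :
    spectralRadius 𝕜 a = ‖x‖₊ := by
  simp [spectralRadius, h, iSup_or, iSup_sup_eq]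

theorem slir_next_generation_matrix_general
    (μ β k γ d : ℝ)
    (hμ : 0 < μ) (hβ : 0 < β) (hk : 0 < k) (hγ : 0 < γ) (hd : 0 < d) :
    IsUnit (!![k + μ, 0; -k, γ + μ + d] : Matrix (Fin 2) (Fin 2) ℝ) ∧
    spectrum ℂ
        (((!![0, β; 0, 0] : Matrix (Fin 2) (Fin 2) ℝ) *
            (!![k + μ, 0; -k, γ + μ + d] : Matrix (Fin 2) (Fin 2) ℝ)⁻¹).map
          (Complex.ofReal)) =
      {((β * k / ((k + μ) * (γ + μ + d)) : ℝ) : ℂ), 0} ∧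
    spectralRadius ℂ
        (((!![0, β; 0, 0] : Matrix (Fin 2) (Fin 2) ℝ) *
            (!![k + μ, 0; -k, γ + μ + d] : Matrix (Fin 2) (Fin 2) ℝ)⁻¹).map
          (Complex.ofReal)) =
      ENNReal.ofReal (β * k / ((k + μ) * (γ + μ + d))) := by
  have ha : k + μ ≠ 0 := by positivity
  have hb : γ + μ + d ≠ 0 := by positivity
  have hK : ((!![0, β; 0, 0] : Matrix (Fin 2) (Fin 2) ℝ) *
      (!![k + μ, 0; -k, γ + μ + d] : Matrix (Fin 2) (Fin 2) ℝ)⁻¹).map Complex.ofReal =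
      !![((β * k / ((k + μ) * (γ + μ + d)) : ℝ) : ℂ), ((β / (γ + μ + d) : ℝ) : ℂ); 0, 0] := by
    rw [Matrix.inv_fin_two_lowerTriangular ha hb, Matrix.mul_fin_two]
    ext i j
    fin_cases i <;> fin_cases j <;> simp [div_eq_mul_inv, mul_assoc]
  have hspec := hK ▸ Matrix.spectrum_fin_two_upperTriangular _ _ (0 : ℂ)
  refine ⟨?_, hspec, ?_⟩
  · rw [Matrix.isUnit_iff_isUnit_det, Matrix.det_fin_two_of, isUnit_iff_ne_zero]
    simpa using mul_ne_zero ha hb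
  · rw [spectralRadius_eq_nnnorm_of_spectrum_eq_pair hspec, Complex.nnnorm_real,
      ← Real.enorm_eq_ofReal (by positivity)]
    rfl

/-- Next-generation matrix. With F = [[0, β],[0,0]] and
V = [[k+μ, 0],[−k, γ+μ+d]], V is invertible, the matrix K = F·V⁻¹ has complex
spectrum exactly {βk/((k+μ)(γ+μ+d)), 0}, and its spectral radius equals
R₀ = βk/((k+μ)(γ+μ+d)). -/
theorem slir_next_generation_matrix
    (Λ μ β k γ d : ℝ)
    (hΛ : 0 < Λ) (hμ : 0 < μ) (hβ : 0 < β) (hk : 0 < k) (hγ : 0 < γ) (hd : 0 < d) :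
    IsUnit (!![k + μ, 0; -k, γ + μ + d] : Matrix (Fin 2) (Fin 2) ℝ) ∧
    spectrum ℂ
        (((!![0, β; 0, 0] : Matrix (Fin 2) (Fin 2) ℝ) *
            (!![k + μ, 0; -k, γ + μ + d] : Matrix (Fin 2) (Fin 2) ℝ)⁻¹).map
          (Complex.ofReal)) =
      {((β * k / ((k + μ) * (γ + μ + d)) : ℝ) : ℂ), 0} ∧
    spectralRadius ℂ
        (((!![0, β; 0, 0] : Matrix (Fin 2) (Fin 2) ℝ) *
            (!![k + μ, 0; -k, γ + μ + d] : Matrix (Fin 2) (Fin 2) ℝ)⁻¹).map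
          (Complex.ofReal)) =
      ENNReal.ofReal (β * k / ((k + μ) * (γ + μ + d))) :=
  slir_next_generation_matrix_general μ β k γ d hμ hβ hk hγ hd
end

section
/- Let M be the 2×2 real matrix with rows (−(k+μ), β) and (k, −(γ+μ+d)), regarded as a matrix over ℂ. Every eigenvalue of M has negative real part if and only if R₀ < 1. -/
/-!
The spectrum of a real `2 × 2` matrix consists of the complex roots of `z² - t z + δ`, with
`t` its trace and `δ` its determinant, and such a quadratic has all its roots in the open left
half-plane iff `t < 0 < δ` (Routh–Hurwitz in degree two). The matrix at hand has trace
`-(k + μ) - (γ + μ + d) < 0` and determinant `(k + μ)(γ + μ + d) - β k`, which is positive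
exactly when `R₀ < 1`.
-/

theorem Matrix.mem_spectrum_map_iff_fin_two {K L : Type*} [Field K] [Field L]
    (A : Matrix (Fin 2) (Fin 2) K) (f : K →+* L) (z : L) :
    z ∈ spectrum L (A.map f) ↔ z ^ 2 - f A.trace * z + f A.det = 0 := by
  rw [Matrix.mem_spectrum_iff_isRoot_charpoly, Matrix.charpoly_map, Matrix.charpoly_fin_two]
  simp

/-- Writing `s` for a square root of the discriminant with `0 ≤ re s`, the root `(t + s) / 2`
lies to the right of `t / 2`. -/
theorem exists_quadratic_root_re_ge (t δ : ℝ) :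
    ∃ z : ℂ, z ^ 2 - t * z + δ = 0 ∧ t ≤ 2 * z.re := by
  obtain ⟨s, hs⟩ := IsAlgClosed.exists_eq_mul_self ((t : ℂ) ^ 2 - 4 * δ)
  rcases le_total 0 s.re with hre | hre
  · refine ⟨(t + s) / 2, by linear_combination (-1 / 4 : ℂ) * hs, ?_⟩
    simp only [Complex.div_ofNat_re, Complex.add_re, Complex.ofReal_re]
    linarith
  · refine ⟨(t - s) / 2, by linear_combination (-1 / 4 : ℂ) * hs, ?_⟩
    simp only [Complex.div_ofNat_re, Complex.sub_re, Complex.ofReal_re]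
    linarith

theorem quadratic_eq_zero_iff_re_im (t δ : ℝ) (z : ℂ) :
    z ^ 2 - t * z + δ = 0 ↔
      z.re ^ 2 - z.im ^ 2 - t * z.re + δ = 0 ∧ z.im * (2 * z.re - t) = 0 := by
  rw [Complex.ext_iff]
  simp only [sq, Complex.add_re, Complex.sub_re, Complex.mul_re, Complex.add_im,
    Complex.sub_im, Complex.mul_im, Complex.ofReal_re, Complex.ofReal_im, Complex.zero_re,
    Complex.zero_im]
  constructor <;> rintro ⟨hre, him⟩ <;> constructor <;> linarith

theorem quadratic_roots_re_neg_iff (t δ : ℝ) :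
    (∀ z : ℂ, z ^ 2 - t * z + δ = 0 → z.re < 0) ↔ t < 0 ∧ 0 < δ := by
  constructor
  · intro H
    obtain ⟨z, hz, ht⟩ := exists_quadratic_root_re_ge t δ
    have hneg := H z hz
    obtain ⟨hre, -⟩ := (quadratic_eq_zero_iff_re_im t δ z).mp hz
    refine ⟨by linarith, ?_⟩
    -- `δ = (im z)² + re z * (t - re z)`, and both factors of the product are negative
    nlinarith [sq_nonneg z.im]
  · rintro ⟨ht, hδ⟩ z hz
    obtain ⟨hre, him⟩ := (quadratic_eq_zero_iff_re_im t δ z).mp hz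
    rcases mul_eq_zero.mp him with hy | hx
    · by_contra! hx
      rw [hy] at hre
      nlinarith
    · linarith

theorem slir_infection_submatrix_hurwitz_iff_general
    (μ β k γ d : ℝ)
    (hμ : 0 < μ) (hk : 0 < k) (hγ : 0 < γ) (hd : 0 < d) :
    (∀ z ∈ spectrum ℂ
        ((!![-(k + μ), β; k, -(γ + μ + d)] : Matrix (Fin 2) (Fin 2) ℝ).map
          Complex.ofReal), z.re < 0) ↔
      β * k / ((k + μ) * (γ + μ + d)) < 1 := by
  have hspec (z : ℂ) :
      z ∈ spectrum ℂ ((!![-(k + μ), β; k, -(γ + μ + d)] : Matrix (Fin 2) (Fin 2) ℝ).map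
        Complex.ofReal) ↔
      z ^ 2 - ((-(k + μ) - (γ + μ + d) : ℝ) : ℂ) * z + (((k + μ) * (γ + μ + d) - β * k : ℝ) : ℂ)
        = 0 := by
    rw [show Complex.ofReal = ⇑Complex.ofRealHom from rfl,
      Matrix.mem_spectrum_map_iff_fin_two, Matrix.trace_fin_two, Matrix.det_fin_two]
    simp only [Matrix.of_apply, Matrix.cons_val_zero, Matrix.cons_val_one,
      Complex.ofRealHom_eq_coe]
    ring_nf
  have hprod : 0 < (k + μ) * (γ + μ + d) := by positivity
  simp_rw [hspec, quadratic_roots_re_neg_iff, div_lt_one hprod]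
  constructor
  · rintro ⟨-, hdet⟩
    linarith
  · intro h
    constructor <;> linarith

/-- For M = [[−(k+μ), β],[k, −(γ+μ+d)]] viewed over ℂ, every
eigenvalue of M has negative real part iff R₀ = βk/((k+μ)(γ+μ+d)) < 1. -/
theorem slir_infection_submatrix_hurwitz_iff
    (Λ μ β k γ d : ℝ)
    (hΛ : 0 < Λ) (hμ : 0 < μ) (hβ : 0 < β) (hk : 0 < k) (hγ : 0 < γ) (hd : 0 < d) :
    (∀ z ∈ spectrum ℂ
        ((!![-(k + μ), β; k, -(γ + μ + d)] : Matrix (Fin 2) (Fin 2) ℝ).map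
          Complex.ofReal), z.re < 0) ↔
      β * k / ((k + μ) * (γ + μ + d)) < 1 :=
  slir_infection_submatrix_hurwitz_iff_general μ β k γ d hμ hk hγ hd
end

section
/- Let M be the 2×2 real matrix with rows (−(k+μ), β) and (k, −(γ+μ+d)). If R₀ > 1, then M has a real eigenvalue that is strictly positive. -/
/-!
The characteristic polynomial of a real `2 × 2` matrix is `x² - (tr A) x + det A`; when
`det A < 0` its value at `0` is negative, so it has a positive root. For the infection
submatrix, `det M = (k + μ)(γ + μ + d) - β k`, which is negative as soon as `R₀ > 1`.
-/

lemma exists_pos_root_sq_sub_mul_add_of_neg {t δ : ℝ} (hδ : δ < 0) :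
    ∃ x : ℝ, 0 < x ∧ x ^ 2 - t * x + δ = 0 := by
  set s := √(t ^ 2 - 4 * δ)
  have hs_sq : s ^ 2 = t ^ 2 - 4 * δ := Real.sq_sqrt (by nlinarith [sq_nonneg t])
  have hs_nonneg : 0 ≤ s := Real.sqrt_nonneg _
  have ht_lt : |t| < s := abs_lt_of_sq_lt_sq (by linarith) hs_nonneg
  exact ⟨(t + s) / 2, by linarith [neg_abs_le t], by nlinarith⟩

lemma Matrix.exists_pos_mem_spectrum_of_det_neg {A : Matrix (Fin 2) (Fin 2) ℝ}
    (hA : A.det < 0) : ∃ x : ℝ, 0 < x ∧ x ∈ spectrum ℝ A := by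
  obtain ⟨x, hx_pos, hx_root⟩ := exists_pos_root_sq_sub_mul_add_of_neg (t := A.trace) hA
  refine ⟨x, hx_pos, ?_⟩
  simpa [Matrix.mem_spectrum_iff_isRoot_charpoly, Matrix.charpoly_fin_two] using hx_root

theorem slir_infection_submatrix_unstable_general
    (μ β k γ d : ℝ)
    (hβ : 0 < β) (hk : 0 < k)
    (hR0 : 1 < β * k / ((k + μ) * (γ + μ + d))) :
    ∃ x : ℝ, 0 < x ∧
      x ∈ spectrum ℝ (!![-(k + μ), β; k, -(γ + μ + d)] : Matrix (Fin 2) (Fin 2) ℝ) := by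
  have hlt : (k + μ) * (γ + μ + d) < β * k :=
    ((one_lt_div_iff.mp hR0).resolve_right fun ⟨hneg, h⟩ => by linarith [mul_pos hβ hk]).2
  apply Matrix.exists_pos_mem_spectrum_of_det_neg
  rw [Matrix.det_fin_two_of]
  linarith

/-- For M = [[−(k+μ), β],[k, −(γ+μ+d)]], if R₀ > 1 then M has a
strictly positive real eigenvalue. -/
theorem slir_infection_submatrix_unstable
    (Λ μ β k γ d : ℝ)
    (hΛ : 0 < Λ) (hμ : 0 < μ) (hβ : 0 < β) (hk : 0 < k) (hγ : 0 < γ) (hd : 0 < d)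
    (hR0 : 1 < β * k / ((k + μ) * (γ + μ + d))) :
    ∃ x : ℝ, 0 < x ∧
      x ∈ spectrum ℝ (!![-(k + μ), β; k, -(γ + μ + d)] : Matrix (Fin 2) (Fin 2) ℝ) :=
  slir_infection_submatrix_unstable_general μ β k γ d hβ hk hR0
end

section
/- Let J be the 4×4 real matrix with rows (−μ, 0, −β, 0), (0, −(k+μ), β, 0), (0, k, −(γ+μ+d), 0), (0, 0, γ, −μ), and let M be the 2×2 real matrix with rows (−(k+μ), β) and (k, −(γ+μ+d)). Then the characteristic polynomial of J equals (X + μ)² times the characteristic polynomial of M; consequently, every complex eigenvalue of J has negative real part if and only if R₀ < 1, and if R₀ > 1 then J has an eigenvalue with positive real part. -/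
/-!
Expanding `det (X - J)` along its first and last columns, each of which has `-μ` as its only
nonzero entry, splits off `(X + μ)²` and leaves the characteristic polynomial
`X² - (tr M) X + det M` of `M`. Since `tr M < 0`, this quadratic has all its roots in the open
left half plane iff `det M > 0`: a nonreal pair of roots has real part `tr M / 2`, while for
`det M ≤ 0` the quadratic formula gives a real root `≥ 0`, positive if `det M < 0`. Finally
`det M = (k + μ)(γ + μ + d)(1 - R₀)`.
-/

open Polynomial

theorem Complex.re_neg_of_sq_sub_mul_add_eq_zero {t δ : ℝ} (ht : t < 0) (hδ : 0 < δ) {z : ℂ}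
    (hz : z ^ 2 - t * z + δ = 0) : z.re < 0 := by
  have hre : z.re ^ 2 - z.im ^ 2 - t * z.re + δ = 0 := by
    simpa [sq] using congrArg Complex.re hz
  have him : z.im * (2 * z.re - t) = 0 := by
    have := congrArg Complex.im hz
    simp only [sq, Complex.sub_im, Complex.add_im, Complex.mul_im, Complex.ofReal_re,
      Complex.ofReal_im, Complex.zero_im] at this
    linarith
  by_contra! hz_re
  have hreal : z.im = 0 := (mul_eq_zero.mp him).resolve_right (by linarith)
  nlinarith

theorem exists_nonneg_sq_sub_mul_add_eq_zero (t : ℝ) {δ : ℝ} (hδ : δ ≤ 0) :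
    ∃ x : ℝ, 0 ≤ x ∧ x ^ 2 - t * x + δ = 0 := by
  have hdisc : 0 ≤ t ^ 2 - 4 * δ := by nlinarith
  have hneg_t_le : -t ≤ √(t ^ 2 - 4 * δ) :=
    (neg_le_abs t).trans (Real.abs_le_sqrt (by linarith))
  exact ⟨(t + √(t ^ 2 - 4 * δ)) / 2, by linarith, by nlinarith [Real.sq_sqrt hdisc]⟩

theorem exists_pos_sq_sub_mul_add_eq_zero (t : ℝ) {δ : ℝ} (hδ : δ < 0) :
    ∃ x : ℝ, 0 < x ∧ x ^ 2 - t * x + δ = 0 := by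
  obtain ⟨x, hx, hroot⟩ := exists_nonneg_sq_sub_mul_add_eq_zero t hδ.le
  refine ⟨x, hx.lt_of_ne ?_, hroot⟩
  rintro rfl
  linarith [hroot]

namespace Matrix

variable {n m : Type*} [Fintype n] [DecidableEq n] [Fintype m] [DecidableEq m]

theorem mem_spectrum_map_ofReal_iff (A : Matrix n n ℝ) (z : ℂ) :
    z ∈ spectrum ℂ (A.map Complex.ofReal) ↔ aeval z A.charpoly = 0 := by
  rw [mem_spectrum_iff_isRoot_charpoly, IsRoot.def, ← eval_map_algebraMap, ← charpoly_map]
  rfl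

theorem mem_spectrum_map_ofReal_of_charpoly_eq {A : Matrix n n ℝ} {B : Matrix m m ℝ} {μ : ℝ}
    (h : A.charpoly = (X + C μ) ^ 2 * B.charpoly) (z : ℂ) :
    z ∈ spectrum ℂ (A.map Complex.ofReal) ↔ z = -μ ∨ z ∈ spectrum ℂ (B.map Complex.ofReal) := by
  simp [mem_spectrum_map_ofReal_iff, h, eq_neg_iff_add_eq_zero]

theorem aeval_charpoly_fin_two (M : Matrix (Fin 2) (Fin 2) ℝ) (z : ℂ) :
    aeval z M.charpoly = z ^ 2 - M.trace * z + M.det := by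
  simp [charpoly_fin_two]

theorem re_neg_of_mem_spectrum_map_ofReal_fin_two {M : Matrix (Fin 2) (Fin 2) ℝ}
    (htr : M.trace < 0) (hdet : 0 < M.det) {z : ℂ} (hz : z ∈ spectrum ℂ (M.map Complex.ofReal)) :
    z.re < 0 := by
  rw [mem_spectrum_map_ofReal_iff, aeval_charpoly_fin_two] at hz
  exact Complex.re_neg_of_sq_sub_mul_add_eq_zero htr hdet hz

theorem ofReal_mem_spectrum_map_ofReal_fin_two_iff (M : Matrix (Fin 2) (Fin 2) ℝ) (x : ℝ) :
    (x : ℂ) ∈ spectrum ℂ (M.map Complex.ofReal) ↔ x ^ 2 - M.trace * x + M.det = 0 := by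
  rw [mem_spectrum_map_ofReal_iff, aeval_charpoly_fin_two]
  exact_mod_cast Iff.rfl

theorem charpoly_slirJacobian (μ β k γ d : ℝ) :
    charpoly
        (!![-μ, 0, -β, 0;
            0, -(k + μ), β, 0;
            0, k, -(γ + μ + d), 0;
            0, 0, γ, -μ] : Matrix (Fin 4) (Fin 4) ℝ) =
      (X + C μ) ^ 2 * charpoly (!![-(k + μ), β; k, -(γ + μ + d)] : Matrix (Fin 2) (Fin 2) ℝ) := by
  simp [charpoly, charmatrix_apply, det_succ_row_zero, Fin.sum_univ_succ, Fin.succAbove]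
  ring

end Matrix

theorem slir_DFE_jacobian_charpoly_and_stability_general
    (μ β k γ d : ℝ)
    (hμ : 0 < μ) (hk : 0 < k) (hγ : 0 < γ) (hd : 0 < d) :
    Matrix.charpoly
        (!![-μ, 0, -β, 0;
            0, -(k + μ), β, 0;
            0, k, -(γ + μ + d), 0;
            0, 0, γ, -μ] : Matrix (Fin 4) (Fin 4) ℝ) =
      (X + C μ) ^ 2 *
        Matrix.charpoly (!![-(k + μ), β; k, -(γ + μ + d)] : Matrix (Fin 2) (Fin 2) ℝ) ∧
    ((∀ z ∈ spectrum ℂ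
        ((!![-μ, 0, -β, 0;
             0, -(k + μ), β, 0;
             0, k, -(γ + μ + d), 0;
             0, 0, γ, -μ] : Matrix (Fin 4) (Fin 4) ℝ).map Complex.ofReal),
        z.re < 0) ↔ β * k / ((k + μ) * (γ + μ + d)) < 1) ∧
    (1 < β * k / ((k + μ) * (γ + μ + d)) →
      ∃ z ∈ spectrum ℂ
        ((!![-μ, 0, -β, 0;
             0, -(k + μ), β, 0;
             0, k, -(γ + μ + d), 0;
             0, 0, γ, -μ] : Matrix (Fin 4) (Fin 4) ℝ).map Complex.ofReal),
        0 < z.re) := by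
  set M : Matrix (Fin 2) (Fin 2) ℝ := !![-(k + μ), β; k, -(γ + μ + d)]
  have hfact := Matrix.charpoly_slirJacobian μ β k γ d
  have hspec := Matrix.mem_spectrum_map_ofReal_of_charpoly_eq hfact
  have hroot_mem (x : ℝ) (hx : x ^ 2 - M.trace * x + M.det = 0) :=
    (hspec x).2 (.inr ((Matrix.ofReal_mem_spectrum_map_ofReal_fin_two_iff M x).2 hx))
  have htr : M.trace < 0 := by simp [M, Matrix.trace_fin_two]; linarith
  have hden : 0 < (k + μ) * (γ + μ + d) := by positivity
  have hdet : M.det = (k + μ) * (γ + μ + d) - β * k := by simp [M, Matrix.det_fin_two]; ring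
  refine ⟨hfact, ⟨fun hstable ↦ ?_, fun hR z hz ↦ ?_⟩, fun hR ↦ ?_⟩
  · by_contra! hR
    obtain ⟨x, hx, hroot⟩ := exists_nonneg_sq_sub_mul_add_eq_zero M.trace
      (show M.det ≤ 0 by rw [one_le_div hden] at hR; linarith)
    have := hstable x (hroot_mem x hroot)
    rw [Complex.ofReal_re] at this
    linarith
  · rcases (hspec z).1 hz with rfl | hzM
    · simpa using hμ
    · exact Matrix.re_neg_of_mem_spectrum_map_ofReal_fin_two htr
        (by rw [div_lt_one hden] at hR; linarith) hzM
  · obtain ⟨x, hx, hroot⟩ := exists_pos_sq_sub_mul_add_eq_zero M.trace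
      (show M.det < 0 by rw [one_lt_div hden] at hR; linarith)
    exact ⟨x, hroot_mem x hroot, by rwa [Complex.ofReal_re]⟩

/-- The characteristic polynomial of the Jacobian J at the DFE
factors as (X + μ)² times the characteristic polynomial of the infection
submatrix M; consequently all complex eigenvalues of J have negative real part
iff R₀ < 1, and if R₀ > 1 then J has an eigenvalue with positive real part. -/
theorem slir_DFE_jacobian_charpoly_and_stability
    (Λ μ β k γ d : ℝ)
    (hΛ : 0 < Λ) (hμ : 0 < μ) (hβ : 0 < β) (hk : 0 < k) (hγ : 0 < γ) (hd : 0 < d) :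
    Matrix.charpoly
        (!![-μ, 0, -β, 0;
            0, -(k + μ), β, 0;
            0, k, -(γ + μ + d), 0;
            0, 0, γ, -μ] : Matrix (Fin 4) (Fin 4) ℝ) =
      (X + C μ) ^ 2 *
        Matrix.charpoly (!![-(k + μ), β; k, -(γ + μ + d)] : Matrix (Fin 2) (Fin 2) ℝ) ∧
    ((∀ z ∈ spectrum ℂ
        ((!![-μ, 0, -β, 0;
             0, -(k + μ), β, 0;
             0, k, -(γ + μ + d), 0;
             0, 0, γ, -μ] : Matrix (Fin 4) (Fin 4) ℝ).map Complex.ofReal),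
        z.re < 0) ↔ β * k / ((k + μ) * (γ + μ + d)) < 1) ∧
    (1 < β * k / ((k + μ) * (γ + μ + d)) →
      ∃ z ∈ spectrum ℂ
        ((!![-μ, 0, -β, 0;
             0, -(k + μ), β, 0;
             0, k, -(γ + μ + d), 0;
             0, 0, γ, -μ] : Matrix (Fin 4) (Fin 4) ℝ).map Complex.ofReal),
        0 < z.re) :=
  slir_DFE_jacobian_charpoly_and_stability_general μ β k γ d hμ hk hγ hd
end
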